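/- The plugging product σ ρ τ := Σ_{v∈N_τ} σ ρ_v τ on the span of decorated rooted trees (with vertex decorations in a commutative monoid) is a pre-Lie product: σ ρ (τ ρ w) − (σ ρ τ) ρ w = τ ρ (σ ρ w) − (τ ρ σ) ρ w. -/

import Mathlib

/-- Planar rooted trees with vertex decorations in `V` and edge decorations in `E`. -/
inductive RT (V E : Type) : Type where
  | node : V → List (E × RT V E) → RT V E

/-- One-step reordering of children (at the root or at a deeper vertex). -/
inductive Swap {V E : Type} : RT V E → RT V E → Prop where
  | here (v : V) (l₁ l₂ : List (E × RT V E)) (p q : E × RT V E) :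
      Swap (.node v (l₁ ++ p :: q :: l₂)) (.node v (l₁ ++ q :: p :: l₂))
  | child (v : V) (l₁ l₂ : List (E × RT V E)) (e : E) {t t' : RT V E} :
      Swap t t' → Swap (.node v (l₁ ++ (e, t) :: l₂)) (.node v (l₁ ++ (e, t') :: l₂))

/-- (Non-planar) decorated rooted trees: planar trees modulo reordering of children. -/
def QT (V E : Type) : Type := Quot (@Swap V E)

/-- The linear span of decorated rooted trees, with rational coefficients. -/
abbrev Span (V E : Type) : Type := QT V E →₀ ℚ

def qt {V E : Type} (t : RT V E) : QT V E := Quot.mk _ t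

/-- A tree, as a basis vector of the span. -/
noncomputable def bas {V E : Type} (t : RT V E) : Span V E := Finsupp.single (qt t) 1

/-- The element of the span given by a list of trees (sum with multiplicity). -/
noncomputable def ofList {V E : Type} (l : List (RT V E)) : Span V E := (l.map bas).sum

/-- Formal rational combination of planar trees, as an element of the span. -/
noncomputable def combo {V E : Type} (l : List (ℚ × RT V E)) : Span V E :=
  (l.map fun p => p.1 • bas p.2).sum

mutual
/-- List of the graftings of `σ` on each vertex of a tree, via a new `a`-edge. -/
def graftT {V E : Type} (a : E) (σ : RT V E) : RT V E → List (RT V E)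
  | .node v l => .node v ((a, σ) :: l) :: (graftL a σ l).map (.node v)
/-- Auxiliary: graftings of `σ` inside one of the listed subtrees. -/
def graftL {V E : Type} (a : E) (σ : RT V E) :
    List (E × RT V E) → List (List (E × RT V E))
  | [] => []
  | (e, t) :: r =>
      ((graftT a σ t).map fun t' => (e, t') :: r)
        ++ ((graftL a σ r).map fun r' => (e, t) :: r')
end

/-- Plugging of `σ` at the root of `τ`: the two roots are identified, their decorations
are added, and the root branches are joined. -/
def plugRoot {V E : Type} [AddCommMonoid V] : RT V E → RT V E → RT V E
  | .node v l, .node w m => .node (v + w) (l ++ m)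

mutual
/-- The summands `σ ρ_v τ` of the plugging product `σ ρ τ = Σ_{v ∈ N_τ} σ ρ_v τ`:
the root of `σ` is identified with the vertex `v` of `τ`, adding decorations. -/
def plugT {V E : Type} [AddCommMonoid V] (σ : RT V E) : RT V E → List (RT V E)
  | .node v l => plugRoot σ (.node v l) :: (plugL σ l).map (.node v)
/-- Auxiliary: pluggings of `σ` at vertices inside the listed subtrees. -/
def plugL {V E : Type} [AddCommMonoid V] (σ : RT V E) :
    List (E × RT V E) → List (List (E × RT V E))
  | [] => []
  | (e, t) :: r =>
      ((plugT σ t).map fun t' => (e, t') :: r)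
        ++ ((plugL σ r).map fun r' => (e, t) :: r')
end

/-!
Write `σ ρ τ` for the multiset of trees obtained by plugging `σ` into the vertices of `τ`.
In `σ ρ (τ ρ w)` the tree `σ` lands either on a vertex of `τ` other than its root, which
gives the terms of `(σ ρ τ) ρ w` except those plugging `σ` at the root of `τ`, or on a vertex
of `w` (possibly the one carrying the root of `τ`). Keeping track of the diagonal terms gives
`σ ρ (τ ρ w) + (σ ρ_root τ) ρ w = (σ ρ τ) ρ w + P(σ, τ, w)`, where `P(σ, τ, w)` plugs `σ` and `τ`
independently into vertices of `w`. Up to reordering of children, both `P` and `σ ρ_root τ` are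
symmetric in `σ, τ`, so subtracting the same identity for `(τ, σ, w)` gives the pre-Lie identity.
-/

section multiMap
variable {α β γ δ : Type}

def multiMap (f : α → β) (l : List α) : Multiset β := (l.map f : List β)

theorem multiMap_cons (f : α → β) (a : α) (l : List α) :
    multiMap f (a :: l) = {f a} + multiMap f l := rfl

theorem multiMap_append (f : α → β) (l₁ l₂ : List α) :
    multiMap f (l₁ ++ l₂) = multiMap f l₁ + multiMap f l₂ := by
  simp [multiMap]

theorem multiMap_map (f : β → γ) (g : α → β) (l : List α) :
    multiMap f (l.map g) = multiMap (fun x => f (g x)) l := by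
  simp [multiMap, Function.comp_def]

theorem map_multiMap (g : β → γ) (f : α → β) (l : List α) :
    Multiset.map g (multiMap f l) = multiMap (fun x => g (f x)) l := by
  simp [multiMap, Function.comp_def]

theorem multiMap_flatMap (f : α → β) (g : γ → List α) (l : List γ) :
    multiMap f (l.flatMap g) = (l : Multiset γ).bind fun x => multiMap f (g x) := by
  simp only [multiMap, ← Multiset.coe_bind, ← Multiset.map_coe, Multiset.map_bind]

theorem multiMap_flatMap_cons (f : α → β) (g : γ → α) (h : γ → List α) (l : List γ) :
    multiMap f (l.flatMap fun x => g x :: h x) =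
      multiMap (fun x => f (g x)) l + multiMap f (l.flatMap h) := by
  rw [multiMap_flatMap, multiMap_flatMap]
  simp only [multiMap_cons, Multiset.bind_add, Multiset.bind_singleton]
  rfl

theorem multiMap_flatMap_append (f : α → β) (g h : γ → List α) (l : List γ) :
    multiMap f (l.flatMap fun x => g x ++ h x) =
      multiMap f (l.flatMap g) + multiMap f (l.flatMap h) := by
  simp only [multiMap_flatMap, multiMap_append, Multiset.bind_add]

theorem multiMap_flatMap_map (f : α → β) (g : γ → List δ) (h : δ → α) (l : List γ) :
    multiMap f (l.flatMap fun x => (g x).map h) = multiMap (fun y => f (h y)) (l.flatMap g) := by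
  simp only [multiMap_flatMap, multiMap_map]

theorem multiMap_flatMap_comm (f : α → β) (g : γ → δ → α) (l₁ : List γ) (l₂ : List δ) :
    multiMap f (l₁.flatMap fun x => l₂.map (g x)) =
      multiMap f (l₂.flatMap fun y => l₁.map fun x => g x y) := by
  simp only [multiMap_flatMap, multiMap_map]
  simpa [multiMap] using Multiset.bind_map_comm (l₁ : Multiset γ) (l₂ : Multiset δ)
    (f := fun x y => f (g x y))

end multiMap

theorem add_right_cancel_of_eq {M : Type*} [AddCommMonoid M] [IsRightCancelAdd M]
    {a b x y : M} (hab : a = b) (h : x + b = y + a) : x = y := by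
  rw [hab] at h
  exact add_right_cancel h

section congruence
variable {V E : Type}

theorem qt_node_append_perm (v : V) (pre : List (E × RT V E)) {m m' : List (E × RT V E)}
    (h : m.Perm m') : qt (RT.node v (pre ++ m)) = qt (RT.node v (pre ++ m')) := by
  induction h generalizing pre with
  | nil => rfl
  | cons x _ ih => simpa using ih (pre ++ [x])
  | swap x y l => exact Quot.sound (Swap.here v pre l y x)
  | trans _ _ ih₁ ih₂ => exact (ih₁ pre).trans (ih₂ pre)

theorem qt_node_perm (v : V) {m m' : List (E × RT V E)} (h : m.Perm m') :
    qt (RT.node v m) = qt (RT.node v m') :=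
  qt_node_append_perm v [] h

/-- The identities about lists of branches are stated inside every context `F` of this kind, so
that the simultaneous induction can transport an identity about one branch to the whole tree. -/
def ChildCongr (F : List (E × RT V E) → QT V E) : Prop :=
  ∀ pre (e : E) (x y : RT V E) post, qt x = qt y →
    F (pre ++ (e, x) :: post) = F (pre ++ (e, y) :: post)

theorem childCongr_qt_node (v : V) : ChildCongr fun l : List (E × RT V E) => qt (RT.node v l) :=
  fun pre e _ _ post h =>
    congrArg (Quot.lift (fun z => qt (RT.node v (pre ++ (e, z) :: post)))
      fun _ _ hs => Quot.sound (Swap.child v pre post e hs)) h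

theorem ChildCongr.cons {F : List (E × RT V E) → QT V E} (hF : ChildCongr F)
    (p : E × RT V E) : ChildCongr fun l => F (p :: l) :=
  fun pre => hF (p :: pre)

def ChildCongr.lift {F : List (E × RT V E) → QT V E} (hF : ChildCongr F) (e : E)
    (r : List (E × RT V E)) : QT V E → QT V E :=
  Quot.lift (fun t => F ((e, t) :: r)) fun _ _ hs => hF [] e _ _ r (Quot.sound hs)

theorem ChildCongr.map_lift_multiMap {F : List (E × RT V E) → QT V E} (hF : ChildCongr F)
    (e : E) (r : List (E × RT V E)) (X : List (RT V E)) :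
    Multiset.map (hF.lift e r) (multiMap qt X) = multiMap (fun t => F ((e, t) :: r)) X :=
  map_multiMap _ _ X

end congruence

section plugging
variable {V E : Type} [AddCommMonoid V]

theorem plugL_append (σ : RT V E) (l₁ l₂ : List (E × RT V E)) :
    plugL σ (l₁ ++ l₂) = (plugL σ l₁).map (· ++ l₂) ++ (plugL σ l₂).map (l₁ ++ ·) := by
  induction l₁ with
  | nil => simp [plugL]
  | cons p r ih =>
      obtain ⟨e, t⟩ := p
      simp [plugL, ih, Function.comp_def]

theorem qt_plugRoot_plugRoot_comm (σ τ w : RT V E) :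
    qt (plugRoot σ (plugRoot τ w)) = qt (plugRoot τ (plugRoot σ w)) := by
  obtain ⟨a, s⟩ := σ; obtain ⟨b, t⟩ := τ; obtain ⟨c, l⟩ := w
  simp only [plugRoot, add_left_comm a b c, ← List.append_assoc]
  exact qt_node_perm _ (List.perm_append_comm.append_right l)

mutual
theorem multiMap_plugT_perm (v : V) {m m' : List (E × RT V E)} (h : m.Perm m') :
    ∀ w : RT V E, multiMap qt (plugT (.node v m) w) = multiMap qt (plugT (.node v m') w)
  | .node c l => by
      simp only [plugT, multiMap_cons, multiMap_map]
      rw [multiMap_plugL_perm v h l _ (childCongr_qt_node c)]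
      congr 2
      exact qt_node_perm _ (h.append_right l)
theorem multiMap_plugL_perm (v : V) {m m' : List (E × RT V E)} (h : m.Perm m') :
    ∀ (l : List (E × RT V E)) (F : List (E × RT V E) → QT V E), ChildCongr F →
      multiMap F (plugL (.node v m) l) = multiMap F (plugL (.node v m') l)
  | [], _, _ => rfl
  | (e, t) :: r, F, hF => by
      have ht := congrArg (Multiset.map (hF.lift e r)) (multiMap_plugT_perm v h t)
      simp only [hF.map_lift_multiMap] at ht
      simp only [plugL, multiMap_append, multiMap_map, ht,
        multiMap_plugL_perm v h r _ (hF.cons (e, t))]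
end

theorem multiMap_plugT_plugRoot_comm (σ τ w : RT V E) :
    multiMap qt (plugT (plugRoot σ τ) w) = multiMap qt (plugT (plugRoot τ σ) w) := by
  obtain ⟨a, s⟩ := σ; obtain ⟨b, t⟩ := τ
  simp only [plugRoot, add_comm b a]
  exact multiMap_plugT_perm _ List.perm_append_comm w

mutual
/-- `P(σ, τ, w)`: `σ` and `τ` plugged into two vertices of `w`, which may coincide. -/
def plugBothT (σ τ : RT V E) : RT V E → List (RT V E)
  | .node v l =>
      plugRoot σ (plugRoot τ (.node v l)) ::
        ((plugL τ l).map (fun l' => plugRoot σ (.node v l'))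
          ++ (plugL σ l).map (fun l' => plugRoot τ (.node v l'))
          ++ (plugBothL σ τ l).map (.node v))
def plugBothL (σ τ : RT V E) : List (E × RT V E) → List (List (E × RT V E))
  | [] => []
  | (e, t) :: r =>
      (plugBothT σ τ t).map (fun t' => (e, t') :: r)
        ++ (plugT σ t).flatMap (fun t' => (plugL τ r).map fun r' => (e, t') :: r')
        ++ (plugT τ t).flatMap (fun t' => (plugL σ r).map fun r' => (e, t') :: r')
        ++ (plugBothL σ τ r).map (fun r' => (e, t) :: r')
end

mutual
theorem multiMap_plugBothT_comm (σ τ : RT V E) :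
    ∀ w : RT V E, multiMap qt (plugBothT σ τ w) = multiMap qt (plugBothT τ σ w)
  | .node c l => by
      simp only [plugBothT, multiMap_cons, multiMap_append, multiMap_map,
        qt_plugRoot_plugRoot_comm σ τ, multiMap_plugBothL_comm σ τ l _ (childCongr_qt_node c)]
      abel
theorem multiMap_plugBothL_comm (σ τ : RT V E) :
    ∀ (l : List (E × RT V E)) (F : List (E × RT V E) → QT V E), ChildCongr F →
      multiMap F (plugBothL σ τ l) = multiMap F (plugBothL τ σ l)
  | [], _, _ => rfl
  | (e, t) :: r, F, hF => by
      have ht := congrArg (Multiset.map (hF.lift e r)) (multiMap_plugBothT_comm σ τ t)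
      simp only [hF.map_lift_multiMap] at ht
      simp only [plugBothL, multiMap_append, multiMap_map, ht,
        multiMap_plugBothL_comm σ τ r _ (hF.cons (e, t))]
      abel
end

mutual
theorem multiMap_plugT_assoc (σ τ : RT V E) : ∀ w : RT V E,
    multiMap qt ((plugT τ w).flatMap (plugT σ)) + multiMap qt (plugT (plugRoot σ τ) w) =
      multiMap qt ((plugT σ τ).flatMap fun u => plugT u w) + multiMap qt (plugBothT σ τ w)
  | .node c l => by
      have ih := multiMap_plugL_assoc σ τ l _ (childCongr_qt_node c)
      obtain ⟨a, s⟩ := σ; obtain ⟨b, t⟩ := τ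
      refine add_right_cancel_of_eq ih ?_
      simp only [plugT, plugBothT, plugRoot, plugL_append, List.flatMap_cons, List.flatMap_map,
        List.map_append, List.map_map, Function.comp_def, multiMap_cons, multiMap_append,
        multiMap_map, multiMap_flatMap_cons, multiMap_flatMap_map]
      abel
theorem multiMap_plugL_assoc (σ τ : RT V E) :
    ∀ (l : List (E × RT V E)) (F : List (E × RT V E) → QT V E), ChildCongr F →
      multiMap F ((plugL τ l).flatMap (plugL σ)) + multiMap F (plugL (plugRoot σ τ) l) =
        multiMap F ((plugT σ τ).flatMap fun u => plugL u l) + multiMap F (plugBothL σ τ l)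
  | [], _, _ => by
      rw [List.flatMap_eq_nil_iff.2 fun u _ => (rfl : plugL u [] = [])]
      rfl
  | (e, t) :: r, F, hF => by
      have ht := congrArg (Multiset.map (hF.lift e r)) (multiMap_plugT_assoc σ τ t)
      simp only [Multiset.map_add, hF.map_lift_multiMap] at ht
      have hr := multiMap_plugL_assoc σ τ r _ (hF.cons (e, t))
      have hswap := multiMap_flatMap_comm F (fun t' r' => (e, t') :: r') (plugT σ t) (plugL τ r)
      refine add_right_cancel_of_eq (congrArg₂ (· + ·) (congrArg₂ (· + ·) ht hr) hswap.symm) ?_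
      simp only [plugL, plugBothL, List.flatMap_append, List.flatMap_map, multiMap_append,
        multiMap_map, multiMap_flatMap_append, multiMap_flatMap_map]
      abel
end

end plugging

theorem Finsupp.leftPreLie_of_single {X R : Type*} [CommRing R]
    (p : (X →₀ R) →ₗ[R] (X →₀ R) →ₗ[R] (X →₀ R))
    (h : ∀ a b c : X,
      p (single a 1) (p (single b 1) (single c 1)) - p (p (single a 1) (single b 1)) (single c 1) =
        p (single b 1) (p (single a 1) (single c 1)) - p (p (single b 1) (single a 1)) (single c 1))
    (x y z : X →₀ R) : p x (p y z) - p (p x y) z = p y (p x z) - p (p y x) z := by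
  induction x using Finsupp.induction_linear with
  | zero => simp
  | add x₁ x₂ h₁ h₂ =>
      simp only [map_add, LinearMap.add_apply]
      rw [add_sub_add_comm, h₁, h₂, add_sub_add_comm]
  | single a r =>
    induction y using Finsupp.induction_linear with
    | zero => simp
    | add y₁ y₂ h₁ h₂ =>
        simp only [map_add, LinearMap.add_apply]
        rw [add_sub_add_comm, h₁, h₂, add_sub_add_comm]
    | single b s =>
      induction z using Finsupp.induction_linear with
      | zero => simp
      | add z₁ z₂ h₁ h₂ =>
          simp only [map_add]
          rw [add_sub_add_comm, h₁, h₂, add_sub_add_comm]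
      | single c t =>
          simp only [← Finsupp.smul_single_one _ r, ← Finsupp.smul_single_one _ s,
            ← Finsupp.smul_single_one _ t, map_smul, LinearMap.smul_apply, smul_smul, mul_comm,
            mul_left_comm, ← smul_sub, h a b c]

section span
variable {V E : Type}

theorem ofList_eq_sum_map (l : List (RT V E)) :
    ofList l = (Multiset.map (fun q => Finsupp.single q 1) (multiMap qt l)).sum := by
  rw [multiMap, Multiset.map_coe, Multiset.sum_coe, List.map_map]
  rfl

theorem ofList_congr {l₁ l₂ : List (RT V E)} (h : multiMap qt l₁ = multiMap qt l₂) :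
    ofList l₁ = ofList l₂ := by
  simp only [ofList_eq_sum_map, h]

theorem ofList_add_ofList_eq {l₁ l₂ l₃ l₄ : List (RT V E)}
    (h : multiMap qt l₁ + multiMap qt l₂ = multiMap qt l₃ + multiMap qt l₄) :
    ofList l₁ + ofList l₂ = ofList l₃ + ofList l₄ := by
  simp only [ofList_eq_sum_map, ← Multiset.sum_add, ← Multiset.map_add, h]

end span

section plugging_product
variable {V E : Type} [AddCommMonoid V]

theorem p_bas_ofList (p : Span V E →ₗ[ℚ] Span V E →ₗ[ℚ] Span V E)
    (hp : ∀ σ τ : RT V E, p (bas σ) (bas τ) = ofList (plugT σ τ)) (σ : RT V E)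
    (l : List (RT V E)) : p (bas σ) (ofList l) = ofList (l.flatMap (plugT σ)) := by
  induction l with
  | nil => simp [ofList]
  | cons u l ih => simp_all [ofList]

theorem p_ofList_bas (p : Span V E →ₗ[ℚ] Span V E →ₗ[ℚ] Span V E)
    (hp : ∀ σ τ : RT V E, p (bas σ) (bas τ) = ofList (plugT σ τ)) (w : RT V E)
    (l : List (RT V E)) : p (ofList l) (bas w) = ofList (l.flatMap fun u => plugT u w) := by
  induction l with
  | nil => simp [ofList]
  | cons u l ih => simp_all [ofList]

theorem plugging_preLie_bas (p : Span V E →ₗ[ℚ] Span V E →ₗ[ℚ] Span V E)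
    (hp : ∀ σ τ : RT V E, p (bas σ) (bas τ) = ofList (plugT σ τ)) (σ τ w : RT V E) :
    p (bas σ) (p (bas τ) (bas w)) - p (p (bas σ) (bas τ)) (bas w) =
      p (bas τ) (p (bas σ) (bas w)) - p (p (bas τ) (bas σ)) (bas w) := by
  have hστ := ofList_add_ofList_eq (multiMap_plugT_assoc σ τ w)
  have hτσ := ofList_add_ofList_eq (multiMap_plugT_assoc τ σ w)
  rw [hp τ w, hp σ w, hp σ τ, hp τ σ, p_bas_ofList p hp, p_bas_ofList p hp, p_ofList_bas p hp,
    p_ofList_bas p hp, eq_sub_of_add_eq hστ, eq_sub_of_add_eq hτσ,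
    ofList_congr (multiMap_plugT_plugRoot_comm σ τ w),
    ofList_congr (multiMap_plugBothT_comm σ τ w)]
  abel

end plugging_product

/-- **The plugging product is pre-Lie.**  On the span of decorated rooted trees (vertex
decorations in a commutative monoid), the bilinear extension `p` of the plugging
`σ ρ τ := Σ_{v∈N_τ} σ ρ_v τ` satisfies the pre-Lie identity
`σ ρ (τ ρ w) − (σ ρ τ) ρ w = τ ρ (σ ρ w) − (τ ρ σ) ρ w`. -/
theorem plugging_preLie {V E : Type} [AddCommMonoid V]
    (p : Span V E →ₗ[ℚ] Span V E →ₗ[ℚ] Span V E)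
    (hp : ∀ σ τ : RT V E, p (bas σ) (bas τ) = ofList (plugT σ τ)) :
    ∀ x y z : Span V E, p x (p y z) - p (p x y) z = p y (p x z) - p (p y x) z := by
  refine Finsupp.leftPreLie_of_single p ?_
  rintro ⟨σ⟩ ⟨τ⟩ ⟨w⟩
  exact plugging_preLie_bas p hp σ τ w
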